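/- arXiv:2601.12853 — 2 statements merged into one kernel-verified Lean document; each statement's English description precedes it below -/
import Mathlib

section
/- Let Θ, S, X be random variables on a probability space taking values in finite sets, such that X = f(Θ, S) for some deterministic function f, S is independent of Θ, and X is independent of Θ. Then the Shannon entropies satisfy H(X) ≤ H(S). -/
/-!
Pick a value `θ` that `Θ` takes with positive probability. On the event `Θ = θ` the message is
`X = f θ S`, and independence of `Θ` from both `X` and `S` lets us cancel `P(Θ = θ)`:
`P(Θ = θ) P(X ∈ t) = P(Θ = θ, f θ S ∈ t) = P(Θ = θ) P(f θ S ∈ t)`.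
So `X` has the law of `f θ ∘ S`, and a function of `S` has at most the entropy of `S`,
by subadditivity of `x ↦ -x log x` on `[0, ∞)`.
-/

open MeasureTheory ProbabilityTheory

/-- Shannon entropy of a finite-valued random variable. -/
noncomputable def entropy {Ω : Type*} [MeasurableSpace Ω] (μ : Measure Ω)
    {α : Type*} [Fintype α] (X : Ω → α) : ℝ :=
  - ∑ x : α, ((μ (X ⁻¹' {x})).toReal * Real.log (μ (X ⁻¹' {x})).toReal)

lemma Real.negMulLog_sum_le {ι : Type*} (s : Finset ι) {q : ι → ℝ} (hq : ∀ i ∈ s, 0 ≤ q i) :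
    Real.negMulLog (∑ i ∈ s, q i) ≤ ∑ i ∈ s, Real.negMulLog (q i) := by
  have hterm : ∀ i ∈ s, q i * Real.log (q i) ≤ q i * Real.log (∑ j ∈ s, q j) := by
    intro i hi
    rcases (hq i hi).eq_or_lt with h | h
    · simp [← h]
    · exact mul_le_mul_of_nonneg_left
        (Real.log_le_log h (Finset.single_le_sum hq hi)) h.le
  simp only [Real.negMulLog_eq_neg, Finset.sum_neg_distrib, Finset.sum_mul, neg_le_neg_iff]
  exact Finset.sum_le_sum hterm

section Entropy

variable {Ω : Type*} [MeasurableSpace Ω] (μ : Measure Ω)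

lemma entropy_eq_sum_negMulLog {α : Type*} [Fintype α] (X : Ω → α) :
    entropy μ X = ∑ x, Real.negMulLog (μ (X ⁻¹' {x})).toReal := by
  simp [entropy, Real.negMulLog_eq_neg]

lemma entropy_congr {α : Type*} [Fintype α] {X Y : Ω → α}
    (h : ∀ x, μ (X ⁻¹' {x}) = μ (Y ⁻¹' {x})) : entropy μ X = entropy μ Y := by
  simp only [entropy, h]

lemma entropy_comp_le [IsFiniteMeasure μ] {B C : Type*} [Fintype B] [MeasurableSpace B]
    [MeasurableSingletonClass B] [Fintype C] [DecidableEq C] (g : B → C) {S : Ω → B}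
    (hS : Measurable S) : entropy μ (g ∘ S) ≤ entropy μ S := by
  have hfiber : ∀ c, (μ ((g ∘ S) ⁻¹' {c})).toReal
      = ∑ b ∈ Finset.univ.filter (g · = c), (μ (S ⁻¹' {b})).toReal := by
    intro c
    have hset : g ⁻¹' {c} = ↑(Finset.univ.filter (g · = c)) := by ext; simp
    rw [Set.preimage_comp, hset, ← sum_measure_preimage_singleton _
      fun b _ => hS (MeasurableSet.singleton b), ENNReal.toReal_sum fun b _ => measure_ne_top μ _]
  rw [entropy_eq_sum_negMulLog, entropy_eq_sum_negMulLog,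
    ← Finset.sum_fiberwise Finset.univ g]
  refine Finset.sum_le_sum fun c _ => ?_
  rw [hfiber]
  exact Real.negMulLog_sum_le _ fun b _ => ENNReal.toReal_nonneg

lemma exists_measure_preimage_singleton_ne_zero [NeZero μ] {A : Type*} [Countable A]
    (Θ : Ω → A) : ∃ a, μ (Θ ⁻¹' {a}) ≠ 0 := by
  by_contra! h
  have hnull : μ (Θ ⁻¹' Set.univ) = 0 :=
    (measure_preimage_eq_zero_iff_of_countable Set.countable_univ).mpr fun a _ => h a
  exact NeZero.ne (μ Set.univ) hnull

lemma measure_preimage_eq_of_indepFun_of_eq_apply [IsFiniteMeasure μ]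
    {A B C : Type*} [MeasurableSpace A] [MeasurableSingletonClass A] [MeasurableSpace B]
    [MeasurableSpace C] {Θ : Ω → A} {S : Ω → B} {X : Ω → C} {f : A → B → C}
    (hfun : ∀ ω, X ω = f (Θ ω) (S ω)) (hΘS : IndepFun Θ S μ) (hΘX : IndepFun Θ X μ)
    {θ : A} (hθ : μ (Θ ⁻¹' {θ}) ≠ 0) (hf : Measurable (f θ)) {t : Set C}
    (ht : MeasurableSet t) : μ (X ⁻¹' t) = μ ((f θ ∘ S) ⁻¹' t) := by
  have hatom : Θ ⁻¹' {θ} ∩ X ⁻¹' t = Θ ⁻¹' {θ} ∩ (f θ ∘ S) ⁻¹' t := by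
    ext ω
    simp +contextual [hfun ω]
  have hprod : μ (Θ ⁻¹' {θ}) * μ (X ⁻¹' t) = μ (Θ ⁻¹' {θ}) * μ ((f θ ∘ S) ⁻¹' t) := by
    rw [← hΘX.measure_inter_preimage_eq_mul _ _ (MeasurableSet.singleton θ) ht, hatom,
      Set.preimage_comp,
      hΘS.measure_inter_preimage_eq_mul _ _ (MeasurableSet.singleton θ) (hf ht)]
  exact (ENNReal.mul_right_inj hθ (measure_ne_top μ _)).mp hprod

end Entropy

theorem entropy_message_le_entropy_key_general
    {Ω : Type*} [MeasurableSpace Ω] (μ : Measure Ω) [IsProbabilityMeasure μ]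
    {A B C : Type*} [Fintype A] [MeasurableSpace A] [DiscreteMeasurableSpace A]
    [Fintype B] [MeasurableSpace B] [DiscreteMeasurableSpace B]
    [Fintype C] [MeasurableSpace C] [DiscreteMeasurableSpace C]
    (Θ : Ω → A) (S : Ω → B) (X : Ω → C)
    (hS : Measurable S)
    (f : A → B → C) (hfun : ∀ ω, X ω = f (Θ ω) (S ω))
    (hΘS : IndepFun Θ S μ) (hΘX : IndepFun Θ X μ) :
    entropy μ X ≤ entropy μ S := by
  classical
  obtain ⟨θ, hθ⟩ := exists_measure_preimage_singleton_ne_zero μ Θ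
  calc entropy μ X = entropy μ (f θ ∘ S) :=
        entropy_congr μ fun c => measure_preimage_eq_of_indepFun_of_eq_apply μ hfun hΘS hΘX hθ
          .of_discrete (MeasurableSet.singleton c)
    _ ≤ entropy μ S := entropy_comp_le μ (f θ) hS

/-- If `X = f(Θ, S)` is a deterministic function of `Θ` and `S`, where `S` is independent
of `Θ` and `X` is independent of `Θ`, then `H(X) ≤ H(S)`. -/
theorem entropy_message_le_entropy_key
    {Ω : Type*} [MeasurableSpace Ω] (μ : Measure Ω) [IsProbabilityMeasure μ]
    {A B C : Type*} [Fintype A] [MeasurableSpace A] [DiscreteMeasurableSpace A]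
    [Fintype B] [MeasurableSpace B] [DiscreteMeasurableSpace B]
    [Fintype C] [MeasurableSpace C] [DiscreteMeasurableSpace C]
    (Θ : Ω → A) (S : Ω → B) (X : Ω → C)
    (hΘ : Measurable Θ) (hS : Measurable S) (hX : Measurable X)
    (f : A → B → C) (hfun : ∀ ω, X ω = f (Θ ω) (S ω))
    (hΘS : IndepFun Θ S μ) (hΘX : IndepFun Θ X μ) :
    entropy μ X ≤ entropy μ S :=
  entropy_message_le_entropy_key_general μ Θ S X hS f hfun hΘS hΘX
end

section
/- Let K ≥ 2 and m be integers with 1 ≤ m ≤ K - 1, and let p be a prime with p ≥ K. Then there exists a K × m matrix G over the field F_p = ZMod p such that the sum of all K rows of G is the zero vector, and every subset of m rows of G is linearly independent. -/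
/-!
Take `K` distinct points `v k` of `F_p` (possible since `p ≥ K`) and the nodal weights
`c k = ∏_{i ≠ k} (v k - v i)⁻¹`. The matrix with rows `c k • (1, v k, …, v k ^ (m - 1))` works:
`∑ k, c k * f (v k)` is the coefficient of `X ^ (K - 1)` in any polynomial `f` of degree `< K`
(compare `f` with its Lagrange interpolant), so every column sums to zero as `m ≤ K - 1`; and `m`
of its rows form a diagonal matrix of nonzero weights times an invertible Vandermonde matrix.
-/

open Polynomial Finset

namespace Lagrange

variable {F ι : Type*} [Field F] [DecidableEq ι] {s : Finset ι} {v : ι → F} {i : ι}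

theorem coeff_basis_card_sub_one (hvs : Set.InjOn v s) (hi : i ∈ s) :
    (Lagrange.basis s v i).coeff (#s - 1) = nodalWeight s v i := by
  rw [← natDegree_basis hvs hi, coeff_natDegree, leadingCoeff_basis hvs hi, nodalWeight,
    prod_inv_distrib]

theorem sum_nodalWeight_mul_eval (hvs : Set.InjOn v s) {f : F[X]} (hf : f.degree < #s) :
    ∑ i ∈ s, nodalWeight s v i * f.eval (v i) = f.coeff (#s - 1) := by
  conv_rhs => rw [eq_interpolate hvs hf]
  rw [interpolate_apply, finsetSum_coeff]
  refine sum_congr rfl fun i hi => ?_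
  rw [coeff_C_mul, coeff_basis_card_sub_one hvs hi, mul_comm]

theorem sum_nodalWeight_mul_pow (hvs : Set.InjOn v s) {j : ℕ} (hj : j < #s - 1) :
    ∑ i ∈ s, nodalWeight s v i * v i ^ j = 0 := by
  have hdeg : ((X : F[X]) ^ j).degree < #s := by
    rw [degree_X_pow]
    exact_mod_cast hj.trans_le (Nat.sub_le _ 1)
  simpa [coeff_X_pow, hj.ne'] using sum_nodalWeight_mul_eval hvs hdeg

end Lagrange

theorem Matrix.linearIndependent_vandermonde_rows {F : Type*} [Field F] {n : ℕ} {v : Fin n → F}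
    (hv : Function.Injective v) : LinearIndependent F (Matrix.vandermonde v).row := by
  rw [Matrix.linearIndependent_rows_iff_isUnit, Matrix.isUnit_iff_isUnit_det, isUnit_iff_ne_zero]
  exact Matrix.det_vandermonde_ne_zero_iff.2 hv

theorem linearIndependent_pow_of_card_eq {F ι : Type*} [Field F] [Fintype ι] {n : ℕ}
    (hι : Fintype.card ι = n) {v : ι → F} (hv : Function.Injective v) :
    LinearIndependent F (fun i (j : Fin n) => v i ^ (j : ℕ)) := by
  let e := Fintype.equivFinOfCardEq hι
  rw [← linearIndependent_equiv e.symm]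
  exact Matrix.linearIndependent_vandermonde_rows (hv.comp e.symm.injective)

section NodalVandermonde

open Lagrange

variable {F ι : Type*} [Field F] [Fintype ι] [DecidableEq ι] {v : ι → F} {m : ℕ}

def nodalVandermonde (v : ι → F) (m : ℕ) : Matrix ι (Fin m) F :=
  .of fun i j => nodalWeight univ v i * v i ^ (j : ℕ)

theorem sum_nodalVandermonde (hv : Function.Injective v) (hm : m ≤ Fintype.card ι - 1) :
    ∑ i, (nodalVandermonde v m).row i = 0 := by
  funext j
  rw [Finset.sum_apply]
  exact sum_nodalWeight_mul_pow hv.injOn (by rw [card_univ]; omega)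

theorem linearIndependent_nodalVandermonde (hv : Function.Injective v) {T : Finset ι}
    (hT : #T = m) : LinearIndependent F (fun i : T => (nodalVandermonde v m).row i) := by
  let c : T → Fˣ := fun i => Units.mk0 _ (nodalWeight_ne_zero hv.injOn (mem_univ (i : ι)))
  have hpow := linearIndependent_pow_of_card_eq (ι := T) (by simpa using hT)
    (hv.comp Subtype.val_injective)
  exact hpow.units_smul c

end NodalVandermonde

theorem exists_key_generator_matrix_general
    (K m p : ℕ) (hm2 : m ≤ K - 1)
    (hp : p.Prime) (hpK : K ≤ p) :
    ∃ G : Matrix (Fin K) (Fin m) (ZMod p),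
      (∑ k, G k = 0) ∧
      ∀ T : Finset (Fin K), T.card = m →
        LinearIndependent (ZMod p) (fun k : T => G k) := by
  have : Fact p.Prime := ⟨hp⟩
  have hv : Function.Injective fun k : Fin K => ((k : ℕ) : ZMod p) := fun a b hab =>
    Fin.ext (CharP.natCast_injOn_Iio (ZMod p) p (a.2.trans_le hpK) (b.2.trans_le hpK) hab)
  exact ⟨nodalVandermonde _ m, sum_nodalVandermonde hv (by simpa using hm2),
    fun T hT => linearIndependent_nodalVandermonde hv hT⟩

/-- Existence of a key-generation matrix: for `2 ≤ K`, `1 ≤ m ≤ K - 1` and a prime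
`p ≥ K`, there is a `K × m` matrix over `F_p` whose rows sum to zero and any `m` of
whose rows are linearly independent. -/
theorem exists_key_generator_matrix
    (K m p : ℕ) (hK : 2 ≤ K) (hm1 : 1 ≤ m) (hm2 : m ≤ K - 1)
    (hp : p.Prime) (hpK : K ≤ p) :
    ∃ G : Matrix (Fin K) (Fin m) (ZMod p),
      (∑ k, G k = 0) ∧
      ∀ T : Finset (Fin K), T.card = m →
        LinearIndependent (ZMod p) (fun k : T => G k) :=
  exists_key_generator_matrix_general K m p hm2 hp hpK
end
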